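/- arXiv:2008.05296 — 2 statements merged into one kernel-verified Lean document; each statement's English description precedes it below -/
import Mathlib

section
/- Let Γ₀ be a subgroup of a group Γ and let λ: Γ → ℝ^r be a function satisfying λ(γⁿ) = n·λ(γ) for all γ ∈ Γ and n ≥ 1. Assume the subgroup of (ℝ^r,+) generated by λ(Γ₀) is dense in ℝ^r, and that λ(γ) ≠ 0 whenever λ(γ) ∈ S₀ for a given finite set S₀ ⊂ λ(Γ₀) \ {0}. Then the subgroup generated by λ(Γ₀) \ S₀ is still dense in ℝ^r. -/
/-!
If `x ≠ 0` lies in the finite set `S₀`, its multiples `n • x` are pairwise distinct, so all but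
finitely many of them avoid `S₀`; since `n • x = λ(γⁿ)` they stay in `λ(Γ₀)`. Hence
`x = (N + 1) • x - N • x` for large `N` lies in the subgroup generated by `λ(Γ₀) \ S₀`, which
therefore equals the subgroup generated by `λ(Γ₀)`.
-/

section TorsionFree

variable {M : Type*}

lemma exists_forall_nsmul_notMem_of_finite [AddCancelMonoid M] [IsAddTorsionFree M]
    {S : Set M} (hS : S.Finite) {x : M} (hx : x ≠ 0) : ∃ N : ℕ, ∀ n, N ≤ n → n • x ∉ S := by
  have hfin : {n : ℕ | n • x ∈ S}.Finite :=
    hS.preimage ((IsAddLeftRegular.all x).nsmul_injective hx).injOn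
  exact (Nat.cofinite_eq_atTop ▸ hfin.eventually_cofinite_notMem).exists_forall_of_atTop

lemma AddSubgroup.mem_closure_diff_of_nsmul_mem [AddGroup M] [IsAddTorsionFree M]
    {S T : Set M} (hS : S.Finite) {x : M} (hx : x ≠ 0) (hT : ∀ n : ℕ, 1 ≤ n → n • x ∈ T) :
    x ∈ closure (T \ S) := by
  obtain ⟨N, hN⟩ := exists_forall_nsmul_notMem_of_finite hS hx
  have hmem : ∀ n, N + 1 ≤ n → n • x ∈ closure (T \ S) := fun n hn =>
    subset_closure ⟨hT n (by omega), hN n (by omega)⟩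
  have hsub : x = (N + 1 + 1) • x - (N + 1) • x := by
    rw [succ_nsmul' _ (N + 1), add_sub_cancel_right]
  rw [hsub]
  exact sub_mem (hmem _ (by omega)) (hmem _ le_rfl)

lemma AddSubgroup.closure_diff_eq_closure [AddGroup M] [IsAddTorsionFree M]
    {S T : Set M} (hS : S.Finite) (hST : ∀ x ∈ S ∩ T, x ≠ 0 ∧ ∀ n : ℕ, 1 ≤ n → n • x ∈ T) :
    closure (T \ S) = closure T := by
  refine le_antisymm (closure_mono Set.sdiff_subset) (closure_le _ |>.mpr fun x hxT => ?_)
  by_cases hxS : x ∈ S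
  · obtain ⟨hx, hT⟩ := hST x ⟨hxS, hxT⟩
    exact mem_closure_diff_of_nsmul_mem hS hx hT
  · exact subset_closure ⟨hxT, hxS⟩

end TorsionFree

/-- If λ(γⁿ) = n·λ(γ), the subgroup generated by λ(Γ₀) is dense in ℝ^r,
and S₀ is a finite subset of λ(Γ₀) \ {0}, then the subgroup generated by
λ(Γ₀) \ S₀ is still dense in ℝ^r. -/
theorem stmt4 {Γ : Type*} [Group Γ] (Γ₀ : Subgroup Γ) (r : ℕ)
    (lam : Γ → (Fin r → ℝ))
    (hhom : ∀ γ : Γ, ∀ n : ℕ, 1 ≤ n → lam (γ ^ n) = (n : ℝ) • lam γ)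
    (hdense : Dense (AddSubgroup.closure (lam '' (Γ₀ : Set Γ)) : Set (Fin r → ℝ)))
    (S₀ : Finset (Fin r → ℝ))
    (hS₀ : (S₀ : Set (Fin r → ℝ)) ⊆ (lam '' (Γ₀ : Set Γ)) \ {0}) :
    Dense (AddSubgroup.closure ((lam '' (Γ₀ : Set Γ)) \ (S₀ : Set (Fin r → ℝ))) :
      Set (Fin r → ℝ)) := by
  have hmultiples : ∀ x ∈ (S₀ : Set (Fin r → ℝ)) ∩ lam '' Γ₀,
      x ≠ 0 ∧ ∀ n : ℕ, 1 ≤ n → n • x ∈ lam '' Γ₀ := by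
    rintro x ⟨hxS, -⟩
    obtain ⟨⟨γ, hγ, rfl⟩, hx⟩ := hS₀ hxS
    refine ⟨hx, fun n hn => ⟨γ ^ n, Γ₀.pow_mem hγ n, ?_⟩⟩
    rw [hhom γ n hn, Nat.cast_smul_eq_nsmul]
  rwa [AddSubgroup.closure_diff_eq_closure S₀.finite_toSet hmultiples]
end

section
/- Let Γ be a δ-hyperbolic group with finite symmetric generating set S and word metric d_w. There exist R₀ > 1 and N₀ > 0 such that for all γ₁, γ₂ ∈ Γ with |γ₁|, |γ₂| ≥ N₀ and |γ₁γ₂| = |γ₁| + |γ₂|, and for all R ≥ R₀, the intersection O_R(γ₁γ₂, e) ∩ O_R(γ₁γ₂, γ₁) ∩ O_R(γ₁, e) of shadows in the Gromov boundary ∂Γ is nonempty. -/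
/-!
Since `(γ₁ · γ₁γ₂)_e = |γ₁| > 2δ`, hyperbolicity turns `(γ₁γ₂ · z)_e ≤ δ` into `(γ₁ · z)_e ≤ 2δ`.
Points `z` with `(γ₁γ₂ · z)_e ≤ δ` exist at every length `n`: of the two ends `u, v` of a
geodesic of length `2n` seen from its midpoint, `(u · v)_e = 0`, so one of them will do.
Geodesics from `γ₁γ₂` and from `γ₁` to such `z_n` converge, along a nonprincipal ultrafilter
(König's lemma, using that balls are finite), to geodesic rays. They stay at bounded distance
because geodesics with a common endpoint fellow travel, and since a geodesic `[a, b]` passes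
within `(a · b)_x + 2δ + 1` of any `x`, they pass near `e` and `γ₁`.
-/

open Filter

variable {Γ : Type*} [Group Γ]

/-- Word length with respect to a generating set S. -/
noncomputable def wordLength (S : Set Γ) (γ : Γ) : ℕ :=
  sInf {n | ∃ l : List Γ, (∀ s ∈ l, s ∈ S) ∧ l.length = n ∧ l.prod = γ}

/-- The left-invariant word metric. -/
noncomputable def wdist (S : Set Γ) (a b : Γ) : ℕ := wordLength S (a⁻¹ * b)

/-- A discrete geodesic ray in (Γ, d_w). -/
def IsGeodesicRay (S : Set Γ) (ρ : ℕ → Γ) : Prop :=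
  ∀ m n : ℕ, wdist S (ρ m) (ρ n) = max m n - min m n

/-- Two rays define the same boundary point iff they stay at bounded distance. -/
def RayEquiv (S : Set Γ) (ρ σ : ℕ → Γ) : Prop :=
  ∃ C : ℕ, ∀ n, wdist S (ρ n) (σ n) ≤ C

/-- Gromov product based at the identity, with respect to the word metric. -/
noncomputable def gp (S : Set Γ) (a b : Γ) : ℝ :=
  ((wdist S 1 a : ℝ) + (wdist S 1 b : ℝ) - (wdist S a b : ℝ)) / 2

theorem Submonoid.closure_eq_top_of_forall_exists_list {M : Type*} [Monoid M] {S : Set M}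
    (h : ∀ x : M, ∃ l : List M, (∀ s ∈ l, s ∈ S) ∧ l.prod = x) : Submonoid.closure S = ⊤ :=
  eq_top_iff.2 fun x _ =>
    let ⟨_, hl, hx⟩ := h x
    hx ▸ Submonoid.list_prod_mem _ fun s hs => Submonoid.subset_closure (hl s hs)

theorem Ultrafilter.exists_forall_eventually_eq_of_finite {ι α β : Type*} (U : Ultrafilter ι)
    {s : α → Set β} (hs : ∀ a, (s a).Finite) {f : ι → α → β} (hf : ∀ i a, f i a ∈ s a) :
    ∃ ρ : α → β, ∀ a, ∀ᶠ i in U, f i a = ρ a := by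
  choose ρ _ hρ using fun a => Ultrafilter.eq_pure_of_finite_mem (f := U.map (f · a)) (hs a)
    (Ultrafilter.mem_map.2 (univ_mem' fun i => hf i a))
  refine ⟨ρ, fun a => ?_⟩
  have h : {ρ a} ∈ U.map (f · a) := by rw [hρ a]; exact rfl
  exact h

section

variable {S : Set Γ}

theorem wordLength_le_length {l : List Γ} (hl : ∀ s ∈ l, s ∈ S) :
    wordLength S l.prod ≤ l.length :=
  Nat.sInf_le ⟨l, hl, rfl, rfl⟩

theorem exists_list_length_eq_wordLength (hS : Submonoid.closure S = ⊤) (γ : Γ) :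
    ∃ l : List Γ, (∀ s ∈ l, s ∈ S) ∧ l.length = wordLength S γ ∧ l.prod = γ := by
  obtain ⟨l, hl, hγ⟩ := Submonoid.exists_list_of_mem_closure (hS ▸ Submonoid.mem_top γ)
  exact Nat.sInf_mem (s := {n | ∃ l : List Γ, (∀ s ∈ l, s ∈ S) ∧ l.length = n ∧ l.prod = γ})
    ⟨l.length, l, hl, rfl, hγ⟩

theorem wordLength_one : wordLength S (1 : Γ) = 0 :=
  Nat.le_zero.mp (wordLength_le_length (l := []) (by simp))

theorem wordLength_mul_le (hS : Submonoid.closure S = ⊤) (a b : Γ) :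
    wordLength S (a * b) ≤ wordLength S a + wordLength S b := by
  obtain ⟨l, hl, hlen, rfl⟩ := exists_list_length_eq_wordLength hS a
  obtain ⟨m, hm, hmlen, rfl⟩ := exists_list_length_eq_wordLength hS b
  rw [← hlen, ← hmlen, ← List.length_append, ← List.prod_append]
  exact wordLength_le_length fun s hs => (List.mem_append.1 hs).elim (hl s) (hm s)

theorem wordLength_inv (hsymm : ∀ s ∈ S, s⁻¹ ∈ S) (hS : Submonoid.closure S = ⊤) (γ : Γ) :
    wordLength S γ⁻¹ = wordLength S γ := by
  suffices h : ∀ γ : Γ, wordLength S γ⁻¹ ≤ wordLength S γ from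
    le_antisymm (h γ) (by simpa using h γ⁻¹)
  intro γ
  obtain ⟨l, hl, hlen, rfl⟩ := exists_list_length_eq_wordLength hS γ
  rw [List.prod_inv_reverse, ← hlen]
  simpa using wordLength_le_length (l := (l.map (·⁻¹)).reverse)
    (by simpa using fun s hs => by simpa using hsymm _ (hl _ hs))

theorem wdist_mul_left (g a b : Γ) : wdist S (g * a) (g * b) = wdist S a b := by
  simp [wdist, mul_assoc]

theorem wdist_one_left (γ : Γ) : wdist S 1 γ = wordLength S γ := by
  simp [wdist]

theorem wdist_self_mul (a b : Γ) : wdist S a (a * b) = wordLength S b := by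
  simp [wdist]

theorem wdist_self (a : Γ) : wdist S a a = 0 := by
  simp [wdist, wordLength_one]

theorem wdist_comm (hsymm : ∀ s ∈ S, s⁻¹ ∈ S) (hS : Submonoid.closure S = ⊤) (a b : Γ) :
    wdist S a b = wdist S b a := by
  rw [wdist, wdist, ← wordLength_inv hsymm hS, mul_inv_rev, inv_inv]

theorem wdist_triangle (hS : Submonoid.closure S = ⊤) (a b c : Γ) :
    wdist S a c ≤ wdist S a b + wdist S b c := by
  simpa [wdist, mul_assoc] using wordLength_mul_le hS (a⁻¹ * b) (b⁻¹ * c)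

theorem finite_setOf_wordLength_le (hfin : S.Finite) (hS : Submonoid.closure S = ⊤) (k : ℕ) :
    {γ : Γ | wordLength S γ ≤ k}.Finite := by
  have : Finite S := hfin.to_subtype
  refine ((List.finite_length_le S k).image fun l => (l.map Subtype.val).prod).subset ?_
  intro γ hγ
  obtain ⟨l, hl, hlen, rfl⟩ := exists_list_length_eq_wordLength hS γ
  refine ⟨l.attach.map fun s => (⟨s.1, hl s.1 s.2⟩ : S), by simpa [hlen] using hγ, ?_⟩
  simp [List.map_map, Function.comp_def]

noncomputable def gpAt (S : Set Γ) (x a b : Γ) : ℝ :=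
  ((wdist S x a : ℝ) + (wdist S x b : ℝ) - (wdist S a b : ℝ)) / 2

theorem gpAt_eq_gp (x a b : Γ) : gpAt S x a b = gp S (x⁻¹ * a) (x⁻¹ * b) := by
  simp [gpAt, gp, wdist, mul_assoc]

theorem gp_comm (hsymm : ∀ s ∈ S, s⁻¹ ∈ S) (hS : Submonoid.closure S = ⊤) (a b : Γ) :
    gp S a b = gp S b a := by
  rw [gp, gp, wdist_comm hsymm hS a b, add_comm (wdist S 1 a : ℝ)]

theorem gp_eq_wdist_of_wdist_add_eq {x g : Γ} (h : wdist S 1 x + wdist S x g = wdist S 1 g) :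
    gp S x g = wdist S 1 x := by
  rw [gp, ← h]
  push_cast
  ring

theorem gpAt_le_gp_of_wdist_add_eq (hsymm : ∀ s ∈ S, s⁻¹ ∈ S) (hS : Submonoid.closure S = ⊤)
    {x g : Γ} (h : wdist S 1 x + wdist S x g = wdist S 1 g) (z : Γ) :
    gpAt S x g z ≤ gp S g z := by
  have hxz := wdist_triangle hS x 1 z
  rw [wdist_comm hsymm hS x 1] at hxz
  have hxz' : (wdist S x z : ℝ) ≤ wdist S 1 x + wdist S 1 z := by exact_mod_cast hxz
  have h' : (wdist S 1 x : ℝ) + wdist S x g = wdist S 1 g := by exact_mod_cast h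
  rw [gpAt, gp]
  linarith

def IsGromovHyperbolic (S : Set Γ) (δ : ℝ) : Prop :=
  ∀ a b c : Γ, min (gp S a c) (gp S c b) - δ ≤ gp S a b

namespace IsGromovHyperbolic

variable {δ : ℝ}

theorem le_gpAt (hhyp : IsGromovHyperbolic S δ) (x a b c : Γ) :
    min (gpAt S x a c) (gpAt S x c b) - δ ≤ gpAt S x a b := by
  simpa only [gpAt_eq_gp] using hhyp _ _ _

theorem gp_le_two_mul (hsymm : ∀ s ∈ S, s⁻¹ ∈ S) (hS : Submonoid.closure S = ⊤)
    (hhyp : IsGromovHyperbolic S δ) {x g z : Γ} (hgz : gp S g z ≤ δ) (hxg : 2 * δ < gp S x g) :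
    gp S x z ≤ 2 * δ := by
  have h := hhyp z g x
  rw [gp_comm hsymm hS z g, gp_comm hsymm hS z x] at h
  by_contra! hxz
  linarith [lt_min hxz hxg]

end IsGromovHyperbolic

structure IsGeodesicSegment (S : Set Γ) (σ : ℕ → Γ) (a b : Γ) : Prop where
  apply_zero : σ 0 = a
  apply_of_wdist_le : ∀ k, wdist S a b ≤ k → σ k = b
  wdist_apply_apply : ∀ i j, i ≤ j → j ≤ wdist S a b → wdist S (σ i) (σ j) = j - i

theorem wdist_mul_prod_take_le {l : List Γ} (hl : ∀ s ∈ l, s ∈ S) (a : Γ) {i j : ℕ}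
    (hij : i ≤ j) : wdist S (a * (l.take i).prod) (a * (l.take j).prod) ≤ j - i := by
  obtain ⟨k, rfl⟩ := Nat.exists_eq_add_of_le hij
  rw [wdist_mul_left, List.take_add, List.prod_append, wdist_self_mul]
  refine (wordLength_le_length fun s hs => hl s ?_).trans (by simp)
  exact List.mem_of_mem_drop (List.mem_of_mem_take hs)

theorem exists_isGeodesicSegment (hS : Submonoid.closure S = ⊤) (a b : Γ) :
    ∃ σ : ℕ → Γ, IsGeodesicSegment S σ a b := by
  obtain ⟨l, hl, hlen, hprod⟩ := exists_list_length_eq_wordLength hS (a⁻¹ * b)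
  set σ : ℕ → Γ := fun k => a * (l.take k).prod
  have hσ0 : σ 0 = a := by simp [σ]
  have hσ_end : ∀ k, wdist S a b ≤ k → σ k = b := fun k hk => by
    simp only [σ]
    rw [List.take_of_length_le (hlen.trans_le hk), hprod, mul_inv_cancel_left]
  refine ⟨σ, hσ0, hσ_end, fun i j hij hj => le_antisymm (wdist_mul_prod_take_le hl a hij) ?_⟩
  have h₁ := wdist_triangle hS a (σ i) b
  have h₂ := wdist_triangle hS (σ i) (σ j) b
  have h₃ : wdist S (σ 0) (σ i) ≤ i - 0 := wdist_mul_prod_take_le hl a i.zero_le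
  have h₄ : wdist S (σ j) (σ (wdist S a b)) ≤ wdist S a b - j := wdist_mul_prod_take_le hl a hj
  rw [hσ0] at h₃
  rw [hσ_end _ le_rfl] at h₄
  omega

namespace IsGeodesicSegment

variable {σ τ : ℕ → Γ} {a b c : Γ}

theorem wdist_left (hσ : IsGeodesicSegment S σ a b) {k : ℕ} (hk : k ≤ wdist S a b) :
    wdist S a (σ k) = k := by
  simpa [hσ.apply_zero] using hσ.wdist_apply_apply 0 k k.zero_le hk

theorem wdist_right (hσ : IsGeodesicSegment S σ a b) {k : ℕ} (hk : k ≤ wdist S a b) :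
    wdist S (σ k) b = wdist S a b - k := by
  simpa [hσ.apply_of_wdist_le _ le_rfl] using hσ.wdist_apply_apply k _ hk le_rfl

theorem wdist_left_le (hσ : IsGeodesicSegment S σ a b) (k : ℕ) : wdist S a (σ k) ≤ k := by
  rcases le_total k (wdist S a b) with hk | hk
  · exact (hσ.wdist_left hk).le
  · rwa [hσ.apply_of_wdist_le k hk]

theorem wdist_apply_apply_eq (hsymm : ∀ s ∈ S, s⁻¹ ∈ S) (hS : Submonoid.closure S = ⊤)
    (hσ : IsGeodesicSegment S σ a b) {i j : ℕ} (hi : i ≤ wdist S a b) (hj : j ≤ wdist S a b) :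
    wdist S (σ i) (σ j) = max i j - min i j := by
  rcases le_total i j with hij | hij
  · rw [hσ.wdist_apply_apply i j hij hj, max_eq_right hij, min_eq_left hij]
  · rw [wdist_comm hsymm hS, hσ.wdist_apply_apply j i hij hi, max_eq_left hij, min_eq_right hij]

variable {δ : ℝ}

theorem exists_wdist_le_gpAt (hsymm : ∀ s ∈ S, s⁻¹ ∈ S) (hS : Submonoid.closure S = ⊤)
    (hhyp : IsGromovHyperbolic S δ) (hσ : IsGeodesicSegment S σ a b) (x : Γ) :
    ∃ k ≤ wdist S a b, (wdist S x (σ k) : ℝ) ≤ gpAt S x a b + 2 * δ + 1 := by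
  set L := wdist S a b with hL
  have hxa : (wdist S x a : ℝ) ≤ wdist S x b + L := by
    exact_mod_cast (wdist_triangle hS x b a).trans_eq (by rw [wdist_comm hsymm hS b a])
  have hxb : (wdist S x b : ℝ) ≤ wdist S x a + L := by
    exact_mod_cast wdist_triangle hS x a b
  -- at time `k` the Gromov products `(a · σ k)_x` and `(σ k · b)_x` differ by less than 1
  set k := ⌊((wdist S x a : ℝ) - wdist S x b + L) / 2⌋₊
  have hk_le : (k : ℝ) ≤ ((wdist S x a : ℝ) - wdist S x b + L) / 2 := Nat.floor_le (by linarith)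
  have hk_gt : ((wdist S x a : ℝ) - wdist S x b + L) / 2 < k + 1 := Nat.lt_floor_add_one _
  have hkL : k ≤ L := Nat.floor_le_of_le (by linarith)
  have hak : (wdist S a (σ k) : ℝ) = k := by exact_mod_cast hσ.wdist_left hkL
  have hkb : (wdist S (σ k) b : ℝ) = L - k := by
    rw [hσ.wdist_right hkL, Nat.cast_sub hkL]
  refine ⟨k, hkL, ?_⟩
  have hmin := hhyp.le_gpAt x a b (σ k)
  simp only [gpAt, hak, hkb, ← hL] at hmin ⊢
  have hQP : (wdist S x (σ k) + wdist S x b - (L - k) : ℝ) / 2 ≤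
      (wdist S x a + wdist S x (σ k) - k) / 2 := by linarith
  linarith [le_min hQP le_rfl]

theorem sub_wordLength_le_gp (hsymm : ∀ s ∈ S, s⁻¹ ∈ S) (hS : Submonoid.closure S = ⊤)
    (hσ : IsGeodesicSegment S σ a b) {n : ℕ} (hn : n ≤ wdist S a b) :
    (n : ℝ) - wordLength S a ≤ gp S (σ n) b := by
  have h₁ := wdist_triangle hS a 1 (σ n)
  have h₂ := wdist_triangle hS a 1 b
  rw [wdist_comm hsymm hS a 1, wdist_one_left, hσ.wdist_left hn] at h₁
  rw [wdist_comm hsymm hS a 1, wdist_one_left] at h₂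
  have h₃ : (wdist S (σ n) b : ℝ) = wdist S a b - n := by
    rw [hσ.wdist_right hn, Nat.cast_sub hn]
  have h₁' : (n : ℝ) ≤ wordLength S a + wdist S 1 (σ n) := by exact_mod_cast h₁
  have h₂' : (wdist S a b : ℝ) ≤ wordLength S a + wdist S 1 b := by exact_mod_cast h₂
  rw [gp, h₃]
  linarith

theorem wdist_apply_le (hsymm : ∀ s ∈ S, s⁻¹ ∈ S) (hS : Submonoid.closure S = ⊤)
    (hhyp : IsGromovHyperbolic S δ) (hσ : IsGeodesicSegment S σ a c)
    (hτ : IsGeodesicSegment S τ b c) {n : ℕ} (ha : n ≤ wdist S a c) (hb : n ≤ wdist S b c) :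
    (wdist S (σ n) (τ n) : ℝ) ≤ 3 * (wordLength S a + wordLength S b) + 2 * δ := by
  have hσc := hσ.sub_wordLength_le_gp hsymm hS ha
  have hτc := hτ.sub_wordLength_le_gp hsymm hS hb
  rw [gp_comm hsymm hS] at hτc
  have hmin := hhyp (σ n) (τ n) c
  have hσ1 := wdist_triangle hS 1 a (σ n)
  have hτ1 := wdist_triangle hS 1 b (τ n)
  rw [wdist_one_left a, hσ.wdist_left ha] at hσ1
  rw [wdist_one_left b, hτ.wdist_left hb] at hτ1
  have hσ1' : (wdist S 1 (σ n) : ℝ) ≤ wordLength S a + n := by exact_mod_cast hσ1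
  have hτ1' : (wdist S 1 (τ n) : ℝ) ≤ wordLength S b + n := by exact_mod_cast hτ1
  have ha0 : (0 : ℝ) ≤ wordLength S a := Nat.cast_nonneg _
  have hb0 : (0 : ℝ) ≤ wordLength S b := Nat.cast_nonneg _
  have hlow : (n : ℝ) - wordLength S a - wordLength S b ≤ min (gp S (σ n) c) (gp S c (τ n)) :=
    le_min (by linarith) (by linarith)
  have hpq : (wdist S (σ n) (τ n) : ℝ) =
      wdist S 1 (σ n) + wdist S 1 (τ n) - 2 * gp S (σ n) (τ n) := by
    rw [gp]; ring
  linarith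

end IsGeodesicSegment

section Limits

variable {δ : ℝ} {U : Ultrafilter ℕ} {g : Γ} {z : ℕ → Γ} {σ : ℕ → ℕ → Γ}

theorem RayEquiv.refl (ρ : ℕ → Γ) : RayEquiv S ρ ρ :=
  ⟨0, fun n => (wdist_self (ρ n)).le⟩

theorem tendsto_wdist_atTop (hS : Submonoid.closure S = ⊤) (g : Γ)
    (hz : ∀ m, wordLength S (z m) = m) : Tendsto (fun m => wdist S g (z m)) atTop atTop :=
  tendsto_atTop_atTop.2 fun k => ⟨k + wordLength S g, fun m hm => by
    have h := wdist_triangle hS 1 g (z m)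
    rw [wdist_one_left, wdist_one_left, hz] at h
    omega⟩

theorem exists_isGeodesicRay_eventually_eq (hfin : S.Finite) (hsymm : ∀ s ∈ S, s⁻¹ ∈ S)
    (hS : Submonoid.closure S = ⊤) (hσ : ∀ m, IsGeodesicSegment S (σ m) g (z m))
    (hz : Tendsto (fun m => wdist S g (z m)) U atTop) :
    ∃ ρ : ℕ → Γ, IsGeodesicRay S ρ ∧ ρ 0 = g ∧ ∀ k, ∀ᶠ m in U, σ m k = ρ k := by
  have hball (k : ℕ) : {γ | wdist S g γ ≤ k}.Finite :=
    ((finite_setOf_wordLength_le hfin hS k).image (g * ·)).subset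
      fun γ hγ => ⟨g⁻¹ * γ, hγ, mul_inv_cancel_left g γ⟩
  obtain ⟨ρ, hρ⟩ := U.exists_forall_eventually_eq_of_finite hball
    fun m k => (hσ m).wdist_left_le k
  refine ⟨ρ, fun i j => ?_, ?_, hρ⟩
  · obtain ⟨m, ⟨hi, hj⟩, hL⟩ :=
      (((hρ i).and (hρ j)).and (hz.eventually_ge_atTop (max i j))).exists
    rw [← hi, ← hj]
    exact (hσ m).wdist_apply_apply_eq hsymm hS (le_of_max_le_left hL) (le_of_max_le_right hL)
  · obtain ⟨m, hm⟩ := (hρ 0).exists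
    rw [← hm, (hσ m).apply_zero]

theorem exists_wdist_le_of_eventually_eq (hsymm : ∀ s ∈ S, s⁻¹ ∈ S)
    (hS : Submonoid.closure S = ⊤) (hhyp : IsGromovHyperbolic S δ) {x : Γ} {ρ : ℕ → Γ}
    (hσ : ∀ m, IsGeodesicSegment S (σ m) g (z m)) (hρ : ∀ k, ∀ᶠ m in U, σ m k = ρ k) {C : ℝ}
    (hC : ∀ m, gpAt S x g (z m) ≤ C) : ∃ n, (wdist S (ρ n) x : ℝ) ≤ C + 2 * δ + 1 := by
  set K := wdist S g x + ⌈C + 2 * δ + 1⌉₊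
  obtain ⟨m, hm⟩ := ((Set.finite_Iic K).eventually_all.2 fun k _ => hρ k).exists
  obtain ⟨k, hkL, hk⟩ := (hσ m).exists_wdist_le_gpAt hsymm hS hhyp x
  have hkK : k ≤ K := by
    have h := wdist_triangle hS g x (σ m k)
    rw [(hσ m).wdist_left hkL] at h
    have : wdist S x (σ m k) ≤ ⌈C + 2 * δ + 1⌉₊ := by
      exact_mod_cast (hk.trans (by linarith [hC m])).trans (Nat.le_ceil _)
    omega
  refine ⟨k, ?_⟩
  rw [wdist_comm hsymm hS, ← hm k hkK]
  linarith [hC m]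

theorem rayEquiv_of_eventually_eq (hsymm : ∀ s ∈ S, s⁻¹ ∈ S) (hS : Submonoid.closure S = ⊤)
    (hhyp : IsGromovHyperbolic S δ) {h : Γ} {τ : ℕ → ℕ → Γ} {ρ ρ' : ℕ → Γ}
    (hσ : ∀ m, IsGeodesicSegment S (σ m) g (z m)) (hτ : ∀ m, IsGeodesicSegment S (τ m) h (z m))
    (hσz : Tendsto (fun m => wdist S g (z m)) U atTop)
    (hτz : Tendsto (fun m => wdist S h (z m)) U atTop)
    (hρ : ∀ k, ∀ᶠ m in U, σ m k = ρ k) (hρ' : ∀ k, ∀ᶠ m in U, τ m k = ρ' k) :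
    RayEquiv S ρ ρ' := by
  refine ⟨⌈3 * (wordLength S g + wordLength S h : ℝ) + 2 * δ⌉₊, fun n => ?_⟩
  obtain ⟨m, ⟨hσρ, hτρ'⟩, hg, hh⟩ := ((hρ n).and (hρ' n)).and
    ((hσz.eventually_ge_atTop n).and (hτz.eventually_ge_atTop n)) |>.exists
  rw [← hσρ, ← hτρ']
  exact_mod_cast ((hσ m).wdist_apply_le hsymm hS hhyp (hτ m) hg hh).trans (Nat.le_ceil _)

end Limits

theorem exists_wordLength_eq (hS : Submonoid.closure S = ⊤)
    (hub : ∀ B : ℕ, ∃ γ : Γ, B < wordLength S γ) (n : ℕ) : ∃ γ : Γ, wordLength S γ = n := by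
  obtain ⟨γ, hγ⟩ := hub n
  obtain ⟨σ, hσ⟩ := exists_isGeodesicSegment hS 1 γ
  exact ⟨σ n, by rw [← wdist_one_left, hσ.wdist_left (by rw [wdist_one_left]; exact hγ.le)]⟩

theorem exists_wordLength_eq_gp_eq_zero (hsymm : ∀ s ∈ S, s⁻¹ ∈ S)
    (hS : Submonoid.closure S = ⊤) (hub : ∀ B : ℕ, ∃ γ : Γ, B < wordLength S γ) (n : ℕ) :
    ∃ u v : Γ, wordLength S u = n ∧ wordLength S v = n ∧ gp S u v = 0 := by
  obtain ⟨w, hw⟩ := exists_wordLength_eq hS hub (2 * n)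
  obtain ⟨σ, hσ⟩ := exists_isGeodesicSegment hS 1 w
  have hn : n ≤ wdist S 1 w := by rw [wdist_one_left, hw]; omega
  -- recentre a geodesic of length `2 n` at its midpoint
  have hu : wordLength S (σ n)⁻¹ = n := by
    rw [wordLength_inv hsymm hS, ← wdist_one_left, hσ.wdist_left hn]
  have hv : wordLength S ((σ n)⁻¹ * w) = n := by
    change wdist S (σ n) w = n
    rw [hσ.wdist_right hn, wdist_one_left, hw]
    omega
  have huv : wdist S (σ n)⁻¹ ((σ n)⁻¹ * w) = 2 * n := by
    rw [wdist_self_mul, hw]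
  refine ⟨_, _, hu, hv, ?_⟩
  rw [gp, wdist_one_left, wdist_one_left, hu, hv, huv]
  push_cast
  ring

theorem IsGromovHyperbolic.exists_wordLength_eq_gp_le {δ : ℝ} (hsymm : ∀ s ∈ S, s⁻¹ ∈ S)
    (hS : Submonoid.closure S = ⊤) (hhyp : IsGromovHyperbolic S δ)
    (hub : ∀ B : ℕ, ∃ γ : Γ, B < wordLength S γ) (g : Γ) (n : ℕ) :
    ∃ z : Γ, wordLength S z = n ∧ gp S g z ≤ δ := by
  obtain ⟨u, v, hu, hv, huv⟩ := exists_wordLength_eq_gp_eq_zero hsymm hS hub n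
  have h := hhyp u v g
  rcases le_total (gp S u g) (gp S g v) with h' | h'
  · exact ⟨u, hu, by rw [gp_comm hsymm hS]; linarith [min_eq_left h']⟩
  · exact ⟨v, hv, by linarith [min_eq_right h']⟩

end

/-- In a δ-hyperbolic group, there exist R₀ > 1 and N₀ > 0 such that for
γ₁, γ₂ with |γ₁|,|γ₂| ≥ N₀ and |γ₁γ₂| = |γ₁| + |γ₂|, and any R ≥ R₀, the shadows
O_R(γ₁γ₂, e), O_R(γ₁γ₂, γ₁) and O_R(γ₁, e) have a common boundary point: there are
pairwise equivalent geodesic rays from the respective basepoints passing within R of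
e, γ₁ and e respectively. -/
theorem stmt8 (S : Set Γ) (hfin : S.Finite) (hsymm : ∀ s ∈ S, s⁻¹ ∈ S)
    (hgen : ∀ γ : Γ, ∃ l : List Γ, (∀ s ∈ l, s ∈ S) ∧ l.prod = γ)
    (δ : ℝ) (hδ : 0 ≤ δ)
    (hhyp : ∀ a b c : Γ, min (gp S a c) (gp S c b) - δ ≤ gp S a b) :
    ∃ R₀ : ℝ, 1 < R₀ ∧ ∃ N₀ : ℕ, 0 < N₀ ∧
      ∀ γ₁ γ₂ : Γ, N₀ ≤ wordLength S γ₁ → N₀ ≤ wordLength S γ₂ →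
        wordLength S (γ₁ * γ₂) = wordLength S γ₁ + wordLength S γ₂ →
        ∀ R : ℝ, R₀ ≤ R →
          ∃ ρ₁ ρ₂ ρ₃ : ℕ → Γ,
            IsGeodesicRay S ρ₁ ∧ ρ₁ 0 = γ₁ * γ₂ ∧ (∃ n, (wdist S (ρ₁ n) 1 : ℝ) ≤ R) ∧
            IsGeodesicRay S ρ₂ ∧ ρ₂ 0 = γ₁ * γ₂ ∧ (∃ n, (wdist S (ρ₂ n) γ₁ : ℝ) ≤ R) ∧
            IsGeodesicRay S ρ₃ ∧ ρ₃ 0 = γ₁ ∧ (∃ n, (wdist S (ρ₃ n) 1 : ℝ) ≤ R) ∧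
            RayEquiv S ρ₁ ρ₂ ∧ RayEquiv S ρ₂ ρ₃ := by
  by_cases hbd : ∃ B : ℕ, ∀ γ : Γ, wordLength S γ ≤ B
  · obtain ⟨B, hB⟩ := hbd
    exact ⟨2, one_lt_two, B + 1, B.succ_pos, fun γ₁ _ h₁ => absurd (hB γ₁) (by omega)⟩
  push Not at hbd
  have hS := Submonoid.closure_eq_top_of_forall_exists_list hgen
  replace hhyp : IsGromovHyperbolic S δ := hhyp
  refine ⟨4 * δ + 2, by linarith, ⌊2 * δ⌋₊ + 1, Nat.succ_pos _, ?_⟩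
  intro γ₁ γ₂ hγ₁ _ hadd R hR
  have hgeod : wdist S 1 γ₁ + wdist S γ₁ (γ₁ * γ₂) = wdist S 1 (γ₁ * γ₂) := by
    rw [wdist_one_left, wdist_one_left, wdist_self_mul, hadd]
  have hγ₁g : 2 * δ < gp S γ₁ (γ₁ * γ₂) := by
    rw [gp_eq_wdist_of_wdist_add_eq hgeod, wdist_one_left]
    exact (Nat.lt_floor_add_one _).trans_le (by exact_mod_cast hγ₁)
  choose z hz hzg using hhyp.exists_wordLength_eq_gp_le hsymm hS hbd (γ₁ * γ₂)
  choose σ hσ using fun m => exists_isGeodesicSegment hS (γ₁ * γ₂) (z m)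
  choose τ hτ using fun m => exists_isGeodesicSegment hS γ₁ (z m)
  have hσz := (tendsto_wdist_atTop hS (γ₁ * γ₂) hz).mono_left Nat.hyperfilter_le_atTop
  have hτz := (tendsto_wdist_atTop hS γ₁ hz).mono_left Nat.hyperfilter_le_atTop
  obtain ⟨ρ, hρ, hρ0, hσρ⟩ := exists_isGeodesicRay_eventually_eq hfin hsymm hS hσ hσz
  obtain ⟨ρ', hρ', hρ'0, hτρ'⟩ := exists_isGeodesicRay_eventually_eq hfin hsymm hS hτ hτz
  obtain ⟨n₁, hn₁⟩ := exists_wdist_le_of_eventually_eq (x := 1) hsymm hS hhyp hσ hσρ hzg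
  obtain ⟨n₂, hn₂⟩ := exists_wdist_le_of_eventually_eq hsymm hS hhyp hσ hσρ
    fun m => (gpAt_le_gp_of_wdist_add_eq hsymm hS hgeod (z m)).trans (hzg m)
  obtain ⟨n₃, hn₃⟩ := exists_wdist_le_of_eventually_eq (x := 1) hsymm hS hhyp hτ hτρ'
    fun m => hhyp.gp_le_two_mul hsymm hS (hzg m) hγ₁g
  exact ⟨ρ, ρ, ρ', hρ, hρ0, ⟨n₁, by linarith⟩, hρ, hρ0, ⟨n₂, by linarith⟩, hρ', hρ'0,
    ⟨n₃, by linarith⟩, RayEquiv.refl ρ,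
    rayEquiv_of_eventually_eq hsymm hS hhyp hσ hτ hσz hτz hσρ hτρ'⟩
end
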